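/- The square root of the Jensen–Shannon divergence is a metric on the space of Bernoulli distributions: for p, q, r ∈ [0,1], d(p,q) = √JS(Bern(p),Bern(q)) is symmetric, vanishes exactly when p = q, and satisfies the triangle inequality d(p,r) ≤ d(p,q) + d(q,r). -/

import Mathlib

open BigOperators Finset

/-- Discrete Kullback–Leibler divergence with logarithm base 2. -/
noncomputable def klF2 {α : Type*} [Fintype α] (p q : α → ℝ) : ℝ :=
  ∑ a, p a * Real.logb 2 (p a / q a)

/-- Density of the Bernoulli distribution with parameter `p` on `Bool`. -/
def bern (p : ℝ) : Bool → ℝ := fun b => if b then p else 1 - p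

/-- Jensen–Shannon divergence (base-2) between `Bern(p)` and `Bern(q)`. -/
noncomputable def bernJS (p q : ℝ) : ℝ :=
  (1 / 2) * klF2 (bern p) (fun b => (bern p b + bern q b) / 2)
    + (1 / 2) * klF2 (bern q) (fun b => (bern p b + bern q b) / 2)

/-!
Write `jsTerm a b = a log a + b log b - (a + b) log ((a + b) / 2)`. Then
`2 log 2 · JS(Bern p, Bern q) = jsTerm p q + jsTerm (1 - p) (1 - q)`, so by Minkowski's
inequality in `ℝ²` it suffices that `√jsTerm` satisfies the triangle inequality on `[0, ∞)`.
When `b` lies outside `[a, c]` this follows from monotonicity of `jsTerm` in each argument.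
When `a < b < c`, the difference `t ↦ √(jsTerm b t) - √(jsTerm a t)` increases on `[b, c]`,
because `∂ₜ √(jsTerm x t)` increases in `x ∈ [0, t)`. Since `jsTerm` is positively homogeneous,
the sign of that `x`-derivative reduces to the one-variable inequality
`jsTerm x (2 - x) + log x · log (2 - x) ≤ 0` on `(0, 1]`, whose left side increases to `0`.
-/

open Real

/-- `2 log 2` times the contribution of one outcome to the Jensen–Shannon divergence. -/
noncomputable def jsTerm (a b : ℝ) : ℝ :=
  a * log a + b * log b - (a + b) * log ((a + b) / 2)

lemma jsTerm_comm (a b : ℝ) : jsTerm a b = jsTerm b a := by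
  simp only [jsTerm, add_comm b a]; ring

@[simp]
lemma jsTerm_self (a : ℝ) : jsTerm a a = 0 := by
  simp only [jsTerm, add_self_div_two]; ring

lemma jsTerm_pos {a b : ℝ} (ha : 0 ≤ a) (hb : 0 ≤ b) (hab : a ≠ b) : 0 < jsTerm a b := by
  have h := Real.strictConvexOn_mul_log.2 (Set.mem_Ici.2 ha) (Set.mem_Ici.2 hb) hab
    (by norm_num : (0 : ℝ) < 1 / 2) (by norm_num : (0 : ℝ) < 1 / 2) (by norm_num)
  simp only [smul_eq_mul, show 1 / 2 * a + 1 / 2 * b = (a + b) / 2 by ring] at h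
  simp only [jsTerm]
  linarith

lemma jsTerm_nonneg {a b : ℝ} (ha : 0 ≤ a) (hb : 0 ≤ b) : 0 ≤ jsTerm a b := by
  rcases eq_or_ne a b with rfl | hab
  · simp
  · exact (jsTerm_pos ha hb hab).le

lemma mul_log_div_eq {w m : ℝ} (hm : m ≠ 0) : w * log (w / m) = w * log w - w * log m := by
  rcases eq_or_ne w 0 with rfl | hw
  · simp
  · rw [log_div hw hm]; ring

lemma mul_logb_add_mul_logb_eq_jsTerm (u v : ℝ) :
    u * logb 2 (u / ((u + v) / 2)) + v * logb 2 (v / ((u + v) / 2)) = jsTerm u v / log 2 := by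
  rcases eq_or_ne ((u + v) / 2) 0 with hm | hm
  · obtain rfl : v = -u := by linarith
    simp [jsTerm]
  · simp only [logb, jsTerm, mul_div_assoc', mul_log_div_eq hm]
    ring

lemma bernJS_eq (p q : ℝ) :
    bernJS p q = (jsTerm p q + jsTerm (1 - p) (1 - q)) / (2 * log 2) := by
  simp only [bernJS, klF2, bern, Fintype.sum_bool, if_true, Bool.false_eq_true, if_false]
  linear_combination (1 / 2) * mul_logb_add_mul_logb_eq_jsTerm p q
    + (1 / 2) * mul_logb_add_mul_logb_eq_jsTerm (1 - p) (1 - q)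

lemma jsTerm_eq_fun (a : ℝ) :
    jsTerm a = fun t => a * log a + t * log t - 2 * ((a + t) / 2 * log ((a + t) / 2)) := by
  ext t; simp only [jsTerm]; ring

lemma continuous_jsTerm (a : ℝ) : Continuous (jsTerm a) := by
  rw [jsTerm_eq_fun]
  have := Real.continuous_mul_log.comp (continuous_const_add a |>.div_const 2)
  fun_prop

lemma hasDerivAt_jsTerm {a t : ℝ} (ht : t ≠ 0) (hat : a + t ≠ 0) :
    HasDerivAt (jsTerm a) (log t - log ((a + t) / 2)) t := by
  rw [jsTerm_eq_fun]
  have hmid : HasDerivAt (fun s => (a + s) / 2) (1 / 2) t :=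
    ((hasDerivAt_id t).const_add a).div_const 2
  have := ((Real.hasDerivAt_mul_log ht).const_add (a * log a)).sub
    (((Real.hasDerivAt_mul_log (by simpa using hat)).comp t hmid).const_mul 2)
  exact this.congr_deriv (by ring)

lemma hasDerivAt_jsTerm_left {x t : ℝ} (hx : x ≠ 0) (hxt : x + t ≠ 0) :
    HasDerivAt (fun y => jsTerm y t) (log x - log ((x + t) / 2)) x := by
  simp only [jsTerm_comm _ t, add_comm x t] at hxt ⊢
  exact hasDerivAt_jsTerm hx hxt

lemma jsTerm_monotoneOn {a : ℝ} (ha : 0 ≤ a) : MonotoneOn (jsTerm a) (Set.Ici a) := by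
  refine monotoneOn_of_hasDerivWithinAt_nonneg (convex_Ici a) (continuous_jsTerm a).continuousOn
    (fun t ht => (hasDerivAt_jsTerm ?_ ?_).hasDerivWithinAt) fun t ht => ?_ <;>
    rw [interior_Ici, Set.mem_Ioi] at ht
  · linarith
  · linarith
  · exact sub_nonneg.2 (log_le_log (by linarith) (by linarith))

lemma jsTerm_antitoneOn (a : ℝ) : AntitoneOn (jsTerm a) (Set.Icc 0 a) := by
  refine antitoneOn_of_hasDerivWithinAt_nonpos (convex_Icc 0 a) (continuous_jsTerm a).continuousOn
    (fun t ht => (hasDerivAt_jsTerm ?_ ?_).hasDerivWithinAt) fun t ht => ?_ <;>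
    rw [interior_Icc] at ht <;> obtain ⟨ht0, hta⟩ := ht
  · exact ht0.ne'
  · linarith
  · exact sub_nonpos.2 (log_le_log ht0 (by linarith))

lemma jsTerm_mul_mul {k : ℝ} (hk : k ≠ 0) (a b : ℝ) :
    jsTerm (k * a) (k * b) = k * jsTerm a b := by
  have hscale : ∀ w : ℝ, k * w * log (k * w) = k * (w * log w) + k * w * log k := by
    intro w
    rcases eq_or_ne w 0 with rfl | hw
    · simp
    · rw [log_mul hk hw]; ring
  have hmid : (k * a + k * b) / 2 = k * ((a + b) / 2) := by ring
  simp only [jsTerm, hmid]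
  rw [show (k * a + k * b) = 2 * (k * ((a + b) / 2)) by ring, mul_assoc 2, hscale, hscale, hscale]
  ring

lemma jsTerm_two_sub_add_log_mul_log_nonpos {x : ℝ} (hx0 : 0 < x) (hx1 : x ≤ 1) :
    jsTerm x (2 - x) + log x * log (2 - x) ≤ 0 := by
  set g : ℝ → ℝ := fun y => y * log y + (2 - y) * log (2 - y) + log y * log (2 - y)
  have hg : ∀ y, jsTerm y (2 - y) + log y * log (2 - y) = g y := fun y => by
    simp [g, jsTerm]
  have hderiv : ∀ y ∈ Set.Ioo (0 : ℝ) 2,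
      HasDerivAt g ((1 - y) * jsTerm y (2 - y) / (y * (2 - y))) y := by
    rintro y ⟨hy0, hy2⟩
    have hsub : HasDerivAt (fun y : ℝ => 2 - y) (-1) y := by
      simpa using (hasDerivAt_id y).const_sub 2
    have h2y : 2 - y ≠ 0 := by linarith
    have hlog := Real.hasDerivAt_log hy0.ne'
    have hlog2 := (Real.hasDerivAt_log h2y).comp y hsub
    have := ((Real.hasDerivAt_mul_log hy0.ne').add
      ((Real.hasDerivAt_mul_log h2y).comp y hsub)).add (hlog.mul hlog2)
    refine this.congr_deriv ?_
    simp only [Function.comp_apply, jsTerm, show (y + (2 - y)) / 2 = 1 by ring, log_one]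
    field_simp
    ring
  have hmono : MonotoneOn g (Set.Ioc 0 1) := by
    refine monotoneOn_of_hasDerivWithinAt_nonneg (convex_Ioc 0 1)
      (f' := fun y => (1 - y) * jsTerm y (2 - y) / (y * (2 - y)))
      (fun y hy => (hderiv y ⟨hy.1, by linarith [hy.2]⟩).continuousAt.continuousWithinAt)
      (fun y hy => ?_) (fun y hy => ?_) <;> rw [interior_Ioc] at hy <;> obtain ⟨hy0, hy1⟩ := hy
    · exact (hderiv y ⟨hy0, by linarith⟩).hasDerivWithinAt
    · have := jsTerm_nonneg hy0.le (by linarith : (0 : ℝ) ≤ 2 - y)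
      have : 0 < 2 - y := by linarith
      have : 0 ≤ 1 - y := by linarith
      positivity
  rw [hg]
  calc g x ≤ g 1 := hmono ⟨hx0, hx1⟩ ⟨one_pos, le_rfl⟩ hx1
    _ = 0 := by norm_num [g]

lemma two_mul_jsTerm_add_mul_log_mul_log_nonpos {x t : ℝ} (hx : 0 < x) (hxt : x ≤ t) :
    2 * jsTerm x t + (x + t) * (log t - log ((x + t) / 2)) * (log x - log ((x + t) / 2)) ≤ 0 := by
  set m := (x + t) / 2 with hm_def
  have hm : 0 < m := by linarith
  have hscaled := jsTerm_two_sub_add_log_mul_log_nonpos (x := x / m) (div_pos hx hm)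
    ((div_le_one hm).2 (by linarith))
  have ht : 2 - x / m = t / m := by field_simp; ring
  rw [ht, log_div hx.ne' hm.ne', log_div (by linarith) hm.ne'] at hscaled
  have hjs : jsTerm x t = m * jsTerm (x / m) (t / m) := by
    rw [← jsTerm_mul_mul hm.ne', mul_div_cancel₀ _ hm.ne', mul_div_cancel₀ _ hm.ne']
  rw [hjs, show x + t = 2 * m by ring]
  nlinarith

/-- The function of `x` here is `∂ₜ √(jsTerm x t)`. -/
lemma monotoneOn_log_sub_log_div_sqrt_jsTerm {t : ℝ} (ht : 0 < t) :
    MonotoneOn (fun x => (log t - log ((x + t) / 2)) / (2 * √(jsTerm x t))) (Set.Ico 0 t) := by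
  have hJ : ∀ x ∈ Set.Ico 0 t, 0 < jsTerm x t := fun x hx => jsTerm_pos hx.1 ht.le hx.2.ne
  have hcont : ContinuousOn (fun x => (log t - log ((x + t) / 2)) / (2 * √(jsTerm x t)))
      (Set.Ico 0 t) := by
    have hJcont : Continuous fun x => jsTerm x t := by
      simpa only [jsTerm_comm _ t] using continuous_jsTerm t
    refine ContinuousOn.div (continuousOn_const.sub (ContinuousOn.log (by fun_prop) ?_))
      (by fun_prop) fun x hx => (mul_pos two_pos (Real.sqrt_pos.2 (hJ x hx))).ne'
    intro x hx
    have := hx.1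
    positivity
  have hderiv : ∀ x ∈ Set.Ioo 0 t, HasDerivAt
      (fun x => (log t - log ((x + t) / 2)) / (2 * √(jsTerm x t)))
      (-(2 * jsTerm x t + (x + t) * (log t - log ((x + t) / 2)) * (log x - log ((x + t) / 2)))
        / (4 * (x + t) * jsTerm x t * √(jsTerm x t))) x := by
    rintro x ⟨hx0, hxt⟩
    have hJx := hJ x ⟨hx0.le, hxt⟩
    have hmid : (x + t) / 2 ≠ 0 := by positivity
    have hN := ((((hasDerivAt_id' x).add_const t).div_const 2).log hmid).const_sub (log t)
    have hD := ((hasDerivAt_jsTerm_left hx0.ne' (by positivity)).sqrt hJx.ne').const_mul 2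
    refine (hN.div hD (by positivity)).congr_deriv ?_
    have hsq := Real.sq_sqrt hJx.le
    field_simp
    rw [hsq]
    ring
  refine monotoneOn_of_hasDerivWithinAt_nonneg (convex_Ico 0 t) hcont
    (fun x hx => (hderiv x (by rwa [interior_Ico] at hx)).hasDerivWithinAt) fun x hx => ?_
  rw [interior_Ico] at hx
  have := two_mul_jsTerm_add_mul_log_mul_log_nonpos hx.1 hx.2.le
  have := hJ x ⟨hx.1.le, hx.2⟩
  have := hx.1
  apply div_nonneg (by linarith)
  positivity

lemma sqrt_jsTerm_le_add_of_lt_of_lt {a b c : ℝ} (ha : 0 ≤ a) (hab : a < b) (hbc : b < c) :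
    √(jsTerm a c) ≤ √(jsTerm a b) + √(jsTerm b c) := by
  have hb : 0 < b := ha.trans_lt hab
  have hderiv : ∀ x ∈ Set.Icc 0 b, ∀ t ∈ Set.Ioo b c, HasDerivAt (fun s => √(jsTerm x s))
      ((log t - log ((x + t) / 2)) / (2 * √(jsTerm x t))) t := by
    rintro x ⟨hx0, hxb⟩ t ⟨hbt, -⟩
    exact (hasDerivAt_jsTerm (by linarith) (by linarith)).sqrt
      (jsTerm_pos hx0 (by linarith) (by linarith)).ne'
  have hmono : MonotoneOn (fun t => √(jsTerm b t) - √(jsTerm a t)) (Set.Icc b c) := by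
    refine monotoneOn_of_hasDerivWithinAt_nonneg (convex_Icc b c)
      ((continuous_jsTerm b).sqrt.sub (continuous_jsTerm a).sqrt).continuousOn
      (fun t ht => ((hderiv b ⟨hb.le, le_rfl⟩ t (by rwa [interior_Icc] at ht)).sub
        (hderiv a ⟨ha, hab.le⟩ t (by rwa [interior_Icc] at ht))).hasDerivWithinAt)
      fun t ht => ?_
    rw [interior_Icc] at ht
    exact sub_nonneg.2 (monotoneOn_log_sub_log_div_sqrt_jsTerm (hb.trans ht.1)
      ⟨ha, hab.trans ht.1⟩ ⟨hb.le, ht.1⟩ hab.le)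
  have := hmono ⟨le_rfl, hbc.le⟩ ⟨hbc.le, le_rfl⟩ hbc.le
  simp only [jsTerm_self, Real.sqrt_zero, zero_sub] at this
  linarith

lemma sqrt_jsTerm_le_add {a b c : ℝ} (ha : 0 ≤ a) (hb : 0 ≤ b) (hc : 0 ≤ c) :
    √(jsTerm a c) ≤ √(jsTerm a b) + √(jsTerm b c) := by
  wlog hac : a ≤ c generalizing a c
  · simpa only [jsTerm_comm, add_comm] using this hc ha (le_of_not_ge hac)
  rcases le_or_gt b a with hba | hab
  · have := jsTerm_antitoneOn c ⟨hb, hba.trans hac⟩ ⟨ha, hac⟩ hba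
    rw [jsTerm_comm c, jsTerm_comm c] at this
    linarith [Real.sqrt_le_sqrt this, Real.sqrt_nonneg (jsTerm a b)]
  rcases le_or_gt c b with hcb | hbc
  · have := jsTerm_monotoneOn ha hac (hac.trans hcb) hcb
    linarith [Real.sqrt_le_sqrt this, Real.sqrt_nonneg (jsTerm b c)]
  exact sqrt_jsTerm_le_add_of_lt_of_lt ha hab hbc

lemma sqrt_add_le_of_sqrt_le_add {a b c a' b' c' : ℝ} (hb : 0 ≤ b) (hc : 0 ≤ c)
    (hb' : 0 ≤ b') (hc' : 0 ≤ c') (h : √a ≤ √b + √c) (h' : √a' ≤ √b' + √c') :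
    √(a + a') ≤ √(b + b') + √(c + c') := by
  rw [Real.sqrt_le_iff] at h h' ⊢
  refine ⟨by positivity, ?_⟩
  have hcs : √b * √c + √b' * √c' ≤ √(b + b') * √(c + c') := by
    have := Real.sum_sqrt_mul_sqrt_le Finset.univ (f := ![b, b']) (g := ![c, c'])
      (by simp [Fin.forall_fin_two, hb, hb']) (by simp [Fin.forall_fin_two, hc, hc'])
    simpa [Fin.sum_univ_two] using this
  nlinarith [Real.sq_sqrt hb, Real.sq_sqrt hc, Real.sq_sqrt hb', Real.sq_sqrt hc',
    Real.sq_sqrt (add_nonneg hb hb'), Real.sq_sqrt (add_nonneg hc hc')]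

lemma bernJS_comm (p q : ℝ) : bernJS p q = bernJS q p := by
  rw [bernJS_eq, bernJS_eq, jsTerm_comm p, jsTerm_comm (1 - p)]

@[simp]
lemma bernJS_self (p : ℝ) : bernJS p p = 0 := by
  simp [bernJS_eq]

lemma bernJS_pos {p q : ℝ} (hp : p ∈ Set.Icc (0 : ℝ) 1) (hq : q ∈ Set.Icc (0 : ℝ) 1)
    (hpq : p ≠ q) : 0 < bernJS p q := by
  have h₁ := jsTerm_pos hp.1 hq.1 hpq
  have h₂ := jsTerm_nonneg (sub_nonneg.2 hp.2) (sub_nonneg.2 hq.2)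
  rw [bernJS_eq]
  positivity

lemma sqrt_bernJS_le_add {p q r : ℝ} (hp : p ∈ Set.Icc (0 : ℝ) 1)
    (hq : q ∈ Set.Icc (0 : ℝ) 1) (hr : r ∈ Set.Icc (0 : ℝ) 1) :
    √(bernJS p r) ≤ √(bernJS p q) + √(bernJS q r) := by
  have hp' := sub_nonneg.2 hp.2
  have hq' := sub_nonneg.2 hq.2
  have hr' := sub_nonneg.2 hr.2
  simp only [bernJS_eq, Real.sqrt_div' _ (by positivity : (0 : ℝ) ≤ 2 * log 2), ← add_div]
  gcongr
  exact sqrt_add_le_of_sqrt_le_add (jsTerm_nonneg hp.1 hq.1) (jsTerm_nonneg hq.1 hr.1)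
    (jsTerm_nonneg hp' hq') (jsTerm_nonneg hq' hr') (sqrt_jsTerm_le_add hp.1 hq.1 hr.1)
    (sqrt_jsTerm_le_add hp' hq' hr')

/-- The Jensen–Shannon distance `√JS(Bern(p), Bern(q))` is a metric on Bernoulli
distributions: it is symmetric, vanishes exactly when `p = q`, and satisfies the
triangle inequality. -/
theorem bernJS_sqrt_metric (p q r : ℝ)
    (hp : p ∈ Set.Icc (0 : ℝ) 1) (hq : q ∈ Set.Icc (0 : ℝ) 1)
    (hr : r ∈ Set.Icc (0 : ℝ) 1) :
    Real.sqrt (bernJS p q) = Real.sqrt (bernJS q p) ∧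
    (Real.sqrt (bernJS p q) = 0 ↔ p = q) ∧
    Real.sqrt (bernJS p r) ≤ Real.sqrt (bernJS p q) + Real.sqrt (bernJS q r) := by
  refine ⟨by rw [bernJS_comm], ⟨fun h => ?_, fun hpq => by simp [hpq]⟩,
    sqrt_bernJS_le_add hp hq hr⟩
  by_contra hpq
  exact (Real.sqrt_pos.2 (bernJS_pos hp hq hpq)).ne' h
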